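/- arXiv:2409.17724 — 5 statements merged into one kernel-verified Lean document; each statement's English description precedes it below -/
import Mathlib

section
/- If G is a 2-connected graph of order n with fewer than 2n-3 edges, then, for every vertex u of G, there is an independent cut S of G with u not in S. -/
/-- `S` is a vertex cut of `G`: some two vertices outside of `S` lie in
different connected components of `G - S`. -/
def IsVertexCut {V : Type*} (G : SimpleGraph V) (S : Set V) : Prop :=
  ∃ a b : ↥(Sᶜ), ¬ (G.induce Sᶜ).Reachable a b

/-- An independent cut is a vertex cut that is an independent set. -/
def IsIndependentCut {V : Type*} (G : SimpleGraph V) (S : Set V) : Prop :=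
  IsVertexCut G S ∧ ∀ a ∈ S, ∀ b ∈ S, ¬ G.Adj a b

/-- A graph is `k`-connected if it has more than `k` vertices and deleting any set of
fewer than `k` vertices leaves a connected graph. -/
def KConnected {V : Type*} [Fintype V] (k : ℕ) (G : SimpleGraph V) : Prop :=
  k < Fintype.card V ∧ ∀ S : Finset V, S.card < k → (G.induce (↑S : Set V)ᶜ).Connected

/-!
Induct on a vertex set `s` with `u ∈ s`, `G[s] - u` connected and at most `2|s| - 4` edges, and
find a nonempty `C ⊆ s` missing the closed neighbourhood `N[u]` whose boundary in `s` is
independent; for `s = V` that boundary is an independent cut avoiding `u`.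

If `N(u)` is independent, `s - N[u]` is nonempty by the edge bound, and a component of it
works, its boundary lying in `N(u)`. Otherwise take a triangle `uxy`. If `G[s] - u - x` is
connected, contract `ux` onto `u`: one vertex is lost and at least two edges (`ux`, and `xy`,
which merges with `uy`), so the edge bound survives. If not, `{u, x}` splits `s` into proper
pieces `s₁ ∪ s₂` meeting in `{u, x}`; their edge counts add up to `e(s) + 1` and their orders
to `|s| + 2`, so one piece still satisfies the edge bound, and a witness there stays one in `s`
since the other piece touches it only in `{u, x} ⊆ N[u]`.
-/

namespace SimpleGraph

open Set

variable {V : Type*} {G G' : SimpleGraph V} {s t C D : Set V} {u x a b p q : V}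

def ReachableIn (G : SimpleGraph V) (t : Set V) : V → V → Prop :=
  Relation.ReflTransGen fun a b => G.Adj a b ∧ a ∈ t ∧ b ∈ t

def ConnectedIn (G : SimpleGraph V) (t : Set V) : Prop :=
  t.Nonempty ∧ ∀ a ∈ t, ∀ b ∈ t, G.ReachableIn t a b

def componentIn (G : SimpleGraph V) (t : Set V) (a : V) : Set V :=
  {v | v ∈ t ∧ G.ReachableIn t a v}

def boundary (G : SimpleGraph V) (C : Set V) : Set V :=
  {a | a ∉ C ∧ ∃ c ∈ C, G.Adj a c}

lemma ReachableIn.symm (h : G.ReachableIn t a b) : G.ReachableIn t b a :=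
  have : Std.Symm fun a b => G.Adj a b ∧ a ∈ t ∧ b ∈ t :=
    ⟨fun _ _ h => ⟨h.1.symm, h.2.2, h.2.1⟩⟩
  Relation.ReflTransGen.stdSymm.symm a b h

lemma ReachableIn.mono (hG : ∀ a ∈ t, ∀ b ∈ t, G.Adj a b → G'.Adj a b)
    (h : G.ReachableIn t a b) : G'.ReachableIn t a b :=
  Relation.ReflTransGen.mono (fun a b h => ⟨hG a h.2.1 b h.2.2 h.1, h.2⟩) a b h

lemma ReachableIn.mem_of_closed (hC : ∀ p ∈ C, ∀ q ∈ t, G.Adj p q → q ∈ C)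
    (h : G.ReachableIn t a b) (ha : a ∈ C) : b ∈ C := by
  induction h with
  | refl => exact ha
  | tail _ hstep ih => exact hC _ ih _ hstep.2.2 hstep.1

lemma reachableIn_of_reachable_induce {a b : t} (h : (G.induce t).Reachable a b) :
    G.ReachableIn t a b :=
  ((reachable_iff_reflTransGen a b).1 h).lift Subtype.val
    (fun p q hpq => ⟨by simpa using hpq, p.2, q.2⟩)

lemma connectedIn_of_connected_induce (h : (G.induce t).Connected) : G.ConnectedIn t :=
  ⟨let ⟨v⟩ := h.nonempty; ⟨v, v.2⟩, fun a ha b hb =>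
    reachableIn_of_reachable_induce (h.preconnected ⟨a, ha⟩ ⟨b, hb⟩)⟩

lemma ConnectedIn.mono (hG : ∀ a ∈ t, ∀ b ∈ t, G.Adj a b → G'.Adj a b)
    (h : G.ConnectedIn t) : G'.ConnectedIn t :=
  ⟨h.1, fun a ha b hb => (h.2 a ha b hb).mono hG⟩

lemma ConnectedIn.exists_adj (h : G.ConnectedIn t) (ha : a ∈ t) (hb : b ∈ t) (hab : a ≠ b) :
    ∃ c ∈ t, G.Adj a c := by
  rcases (h.2 a ha b hb).cases_head with rfl | ⟨c, hac, -⟩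
  · exact absurd rfl hab
  · exact ⟨c, hac.2.2, hac.1⟩

lemma ConnectedIn.sdiff (h : G.ConnectedIn t) (hx : x ∈ t) (hxD : x ∉ D)
    (hD : ∀ p ∈ D, ∀ q ∈ t \ D, G.Adj p q → q = x) : G.ConnectedIn (t \ D) := by
  have to_x : ∀ a, G.ReachableIn t a x → a ∉ D → G.ReachableIn (t \ D) a x := by
    intro a hax
    induction hax using Relation.ReflTransGen.head_induction_on with
    | refl => exact fun _ => .refl
    | @head a c hac _ ih =>
      intro haD
      by_cases hcD : c ∈ D
      · rw [hD c hcD a ⟨hac.2.1, haD⟩ hac.1.symm]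
        exact .refl
      · exact .head ⟨hac.1, ⟨hac.2.1, haD⟩, hac.2.2, hcD⟩ (ih hcD)
  refine ⟨⟨x, hx, hxD⟩, fun a ha b hb => ?_⟩
  exact (to_x a (h.2 a ha.1 x hx) ha.2).trans (to_x b (h.2 b hb.1 x hx) hb.2).symm

lemma mem_componentIn_of_adj (hp : p ∈ G.componentIn t a) (hq : q ∈ t) (hpq : G.Adj p q) :
    q ∈ G.componentIn t a :=
  ⟨hq, hp.2.tail ⟨hpq, hp.1, hq⟩⟩

lemma exists_separation_of_not_connectedIn (ht : t.Nonempty) (h : ¬ G.ConnectedIn t) :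
    ∃ A ⊆ t, A.Nonempty ∧ (t \ A).Nonempty ∧ ∀ p ∈ A, ∀ q ∈ t \ A, ¬ G.Adj p q := by
  obtain ⟨a, ha, b, hb, hab⟩ : ∃ a ∈ t, ∃ b ∈ t, ¬ G.ReachableIn t a b := by
    by_contra! h'
    exact h ⟨ht, h'⟩
  exact ⟨G.componentIn t a, fun v hv => hv.1, ⟨a, ha, .refl⟩, ⟨b, hb, fun hb' => hab hb'.2⟩,
    fun p hp q hq hpq => hq.2 (mem_componentIn_of_adj hp hq.1 hpq)⟩

lemma edgeSet_inter_sym2_union {s₁ s₂ : Set V}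
    (hsep : ∀ p ∈ s₁ \ s₂, ∀ q ∈ s₂ \ s₁, ¬ G.Adj p q) :
    G.edgeSet ∩ (s₁ ∪ s₂).sym2 = (G.edgeSet ∩ s₁.sym2) ∪ (G.edgeSet ∩ s₂.sym2) := by
  ext e
  induction e using Sym2.ind with
  | _ p q =>
  simp only [mem_inter_iff, mem_union, mem_edgeSet, mk_mem_sym2_iff]
  constructor
  · rintro ⟨hpq, hp, hq⟩
    have := hsep p
    have := hsep q
    have := hpq.symm
    simp only [mem_sdiff] at *
    tauto
  · rintro (⟨hpq, hp, hq⟩ | ⟨hpq, hp, hq⟩)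
    exacts [⟨hpq, .inl hp, .inl hq⟩, ⟨hpq, .inr hp, .inr hq⟩]

lemma ncard_edgeSet_inter_sym2_add [Finite V] {s₁ s₂ : Set V}
    (hsep : ∀ p ∈ s₁ \ s₂, ∀ q ∈ s₂ \ s₁, ¬ G.Adj p q) :
    (G.edgeSet ∩ s₁.sym2).ncard + (G.edgeSet ∩ s₂.sym2).ncard =
      (G.edgeSet ∩ (s₁ ∪ s₂).sym2).ncard + (G.edgeSet ∩ (s₁ ∩ s₂).sym2).ncard := by
  rw [edgeSet_inter_sym2_union hsep, sym2_inter, inter_inter_distrib_left,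
    ncard_union_add_ncard_inter]

lemma edgeSet_inter_sym2_pair (hux : G.Adj u x) :
    G.edgeSet ∩ ({u, x} : Set V).sym2 = {s(u, x)} := by
  ext e
  induction e using Sym2.ind with
  | _ p q =>
  simp only [mem_inter_iff, mem_edgeSet, mk_mem_sym2_iff, mem_insert_iff, mem_singleton_iff,
    Sym2.eq_iff]
  constructor
  · rintro ⟨hpq, hp | hp, hq | hq⟩ <;> subst hp hq
    · exact (hpq.ne rfl).elim
    · exact .inl ⟨rfl, rfl⟩
    · exact .inr ⟨rfl, rfl⟩
    · exact (hpq.ne rfl).elim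
  · rintro (⟨rfl, rfl⟩ | ⟨rfl, rfl⟩)
    exacts [⟨hux, .inl rfl, .inr rfl⟩, ⟨hux.symm, .inr rfl, .inl rfl⟩]

/-- `C` avoids all of `N[u]`, not just `u`, so that a witness survives contracting an edge at `u`
and passes from a piece glued along `{u, x}` with `x ∈ N(u)` to the whole. -/
def HasIndepCutAwayFrom (G : SimpleGraph V) (s : Set V) (u : V) : Prop :=
  ∃ C ⊆ s, C.Nonempty ∧ (∀ c ∈ C, c ≠ u ∧ ¬ G.Adj u c) ∧ G.IsIndepSet (s ∩ G.boundary C)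

lemma HasIndepCutAwayFrom.mono {s' : Set V} (h : G.HasIndepCutAwayFrom s' u) (hs : s' ⊆ s)
    (hsep : ∀ p ∈ s \ s', ∀ q ∈ s', G.Adj p q → q = u ∨ G.Adj u q) :
    G.HasIndepCutAwayFrom s u := by
  obtain ⟨C, hCs, hCne, hCu, hind⟩ := h
  refine ⟨C, hCs.trans hs, hCne, hCu, hind.mono ?_⟩
  rintro a ⟨has, haC, c, hc, hac⟩
  refine ⟨by_contra fun has' => ?_, haC, c, hc, hac⟩
  obtain hcu | hcu := hsep a ⟨has, has'⟩ c (hCs hc) hac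
  exacts [(hCu c hc).1 hcu, (hCu c hc).2 hcu]

lemma hasIndepCutAwayFrom_of_isIndepSet_neighborSet {w : V} (hw : w ∈ s) (hwu : w ≠ u)
    (huw : ¬ G.Adj u w) (hind : G.IsIndepSet (s ∩ G.neighborSet u)) :
    G.HasIndepCutAwayFrom s u := by
  set W := {v | v ∈ s ∧ v ≠ u ∧ ¬ G.Adj u v}
  refine ⟨G.componentIn W w, fun v hv => hv.1.1, ⟨w, ⟨hw, hwu, huw⟩, .refl⟩,
    fun c hc => hc.1.2, hind.mono ?_⟩
  rintro a ⟨has, haC, c, hc, hac⟩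
  refine ⟨has, by_contra fun hua => ?_⟩
  have hau : a ≠ u := by
    rintro rfl
    exact hc.1.2.2 hac
  exact haC (mem_componentIn_of_adj hc ⟨has, hau, hua⟩ hac.symm)

lemma exists_not_adj_of_isIndepSet_neighborSet [Finite V] (hu : u ∈ s)
    (hconn : G.ConnectedIn (s \ {u}))
    (hcount : (G.edgeSet ∩ s.sym2).ncard + 4 ≤ 2 * s.ncard)
    (hind : G.IsIndepSet (s ∩ G.neighborSet u)) :
    ∃ w ∈ s, w ≠ u ∧ ¬ G.Adj u w := by
  by_contra! hdom
  obtain ⟨x, hxs, hxu⟩ := hconn.1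
  have hux : G.Adj u x := hdom x hxs (by simpa using hxu)
  have hedge : 0 < (G.edgeSet ∩ s.sym2).ncard := (ncard_pos).2 ⟨s(u, x), hux, hu, hxs⟩
  have hlt : ({u, x} : Set V).ncard < s.ncard := by
    rw [ncard_pair hux.ne]
    omega
  obtain ⟨z, hzs, hz⟩ := exists_mem_notMem_of_ncard_lt_ncard hlt
  simp only [mem_insert_iff, mem_singleton_iff, not_or] at hz
  obtain ⟨c, hc, hxc⟩ := hconn.exists_adj ⟨hxs, hxu⟩ ⟨hzs, hz.1⟩ (Ne.symm hz.2)
  exact hind ⟨hxs, hux⟩ ⟨hc.1, hdom c hc.1 (by simpa using hc.2)⟩ hxc.ne hxc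

/-- The vertex `x` stays in the vertex type, as an isolated vertex. -/
def contractEdge [DecidableEq V] (G : SimpleGraph V) (u x : V) : SimpleGraph V :=
  fromEdgeSet (Sym2.map (Function.update id x u) '' G.edgeSet)

section contractEdge

variable [DecidableEq V]

lemma contractEdge_adj_of_adj (ha : a ≠ x) (hb : b ≠ x) (h : G.Adj a b) :
    (G.contractEdge u x).Adj a b :=
  (fromEdgeSet_adj _).2
    ⟨⟨s(a, b), h, by simp [Function.update_of_ne ha, Function.update_of_ne hb]⟩, h.ne⟩

lemma contractEdge_adj_of_adj_right (hbu : b ≠ u) (h : G.Adj x b) :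
    (G.contractEdge u x).Adj u b :=
  (fromEdgeSet_adj _).2 ⟨⟨s(x, b), h, by simp [Function.update_of_ne h.ne']⟩, hbu.symm⟩

lemma ncard_edgeSet_contractEdge_add_two_le [Finite V] {y : V} (hux : G.Adj u x)
    (huy : G.Adj u y) (hxy : G.Adj x y) (hu : u ∈ s) (hx : x ∈ s) (hy : y ∈ s) :
    ((G.contractEdge u x).edgeSet ∩ (s \ {x}).sym2).ncard + 2 ≤ (G.edgeSet ∩ s.sym2).ncard := by
  set φ := Function.update (id : V → V) x u
  set E := G.edgeSet ∩ s.sym2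
  have hsub : (G.contractEdge u x).edgeSet ∩ (s \ {x}).sym2 ⊆
      Sym2.map φ '' (E \ {s(u, x), s(x, y)}) := by
    rintro _ ⟨he', hes⟩
    rw [contractEdge, edgeSet_fromEdgeSet] at he'
    obtain ⟨⟨e, he, rfl⟩, hdiag⟩ := he'
    induction e using Sym2.ind with
    | _ p q =>
    have hmem : ∀ v, φ v ∈ s \ {x} → v ∈ s := fun v hv => by
      by_cases hvx : v = x
      · exact hvx ▸ hx
      · simpa [φ, Function.update_of_ne hvx] using hv.1
    -- `xy` and `uy` have the same image, so the preimage can always avoid `xy`.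
    by_cases hexy : s(p, q) = s(x, y)
    · refine ⟨s(u, y), ⟨⟨huy, hu, hy⟩, ?_⟩, ?_⟩
      · simp [hxy.ne', hux.ne, huy.ne]
      · simp [hexy, φ, hux.ne, hxy.ne', Function.update_of_ne]
    · refine ⟨s(p, q), ⟨⟨he, hmem p hes.1, hmem q hes.2⟩, ?_⟩, rfl⟩
      rintro (hux' | hxy')
      · exact hdiag (by simp [Sym2.mem_diagSet, hux', hux.ne])
      · exact hexy hxy'
  have hpair : ({s(u, x), s(x, y)} : Set (Sym2 V)) ⊆ E := by
    rintro _ (rfl | rfl)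
    exacts [⟨hux, hu, hx⟩, ⟨hxy, hx, hy⟩]
  have hne : s(u, x) ≠ s(x, y) := by simp [hux.ne, huy.ne]
  calc _ ≤ (Sym2.map φ '' (E \ {s(u, x), s(x, y)})).ncard + 2 :=
        Nat.add_le_add_right (ncard_le_ncard hsub) 2
    _ ≤ (E \ {s(u, x), s(x, y)}).ncard + 2 := Nat.add_le_add_right ncard_image_le 2
    _ = E.ncard := by rw [← ncard_pair hne, ncard_sdiff_add_ncard_of_subset hpair]

lemma HasIndepCutAwayFrom.of_contractEdge (hux : u ≠ x)
    (h : (G.contractEdge u x).HasIndepCutAwayFrom (s \ {x}) u) : G.HasIndepCutAwayFrom s u := by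
  obtain ⟨C, hCs, hCne, hCu, hind⟩ := h
  have hC : ∀ c ∈ C, c ≠ u ∧ ¬ G.Adj u c ∧ ¬ G.Adj x c := fun c hc =>
    ⟨(hCu c hc).1, fun h => (hCu c hc).2 (contractEdge_adj_of_adj hux (hCs hc).2 h),
      fun h => (hCu c hc).2 (contractEdge_adj_of_adj_right (hCu c hc).1 h)⟩
  have hsub : s ∩ G.boundary C ⊆ (s \ {x}) ∩ (G.contractEdge u x).boundary C := by
    rintro a ⟨has, haC, c, hc, hac⟩
    have hax : a ≠ x := by
      rintro rfl
      exact (hC c hc).2.2 hac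
    exact ⟨⟨has, hax⟩, haC, c, hc, contractEdge_adj_of_adj hax (hCs hc).2 hac⟩
  refine ⟨C, hCs.trans sdiff_subset, hCne, fun c hc => ⟨(hC c hc).1, (hC c hc).2.1⟩, ?_⟩
  exact fun a ha b hb hab hadj => hind (hsub ha) (hsub hb) hab
    (contractEdge_adj_of_adj (hsub ha).1.2 (hsub hb).1.2 hadj)

end contractEdge

lemma exists_cover_of_not_connectedIn (hu : u ∈ s) (hx : x ∈ s)
    (hne : (s \ {u, x}).Nonempty) (h : ¬ G.ConnectedIn (s \ {u, x})) :
    ∃ s₁ s₂, s₁ ⊂ s ∧ s₂ ⊂ s ∧ s₁ ∪ s₂ = s ∧ s₁ ∩ s₂ = {u, x} ∧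
      ∀ p ∈ s₁ \ s₂, ∀ q ∈ s₂ \ s₁, ¬ G.Adj p q := by
  obtain ⟨A, hAt, hAne, hBne, hsep⟩ := exists_separation_of_not_connectedIn hne h
  have huA : u ∉ A := fun h => (hAt h).2 (.inl rfl)
  have hxA : x ∉ A := fun h => (hAt h).2 (.inr rfl)
  refine ⟨s \ A, s \ ((s \ {u, x}) \ A), ?_, ?_, ?_, ?_, ?_⟩
  · exact sdiff_ssubset_left_iff.2 (hAne.mono fun v hv => ⟨(hAt hv).1, hv⟩)
  · exact sdiff_ssubset_left_iff.2 (hBne.mono fun v hv => ⟨hv.1.1, hv⟩)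
  · ext v
    simp only [mem_union, mem_sdiff]
    tauto
  · ext v
    simp only [mem_inter_iff, mem_sdiff, mem_insert_iff, mem_singleton_iff]
    constructor
    · tauto
    · rintro (rfl | rfl) <;> simp_all
  · rintro p ⟨⟨hps, -⟩, hp⟩ q ⟨⟨hqs, -⟩, hq⟩ hpq
    have hqA : q ∈ A := by_contra fun hqA => hq ⟨hqs, hqA⟩
    have hpB : p ∈ (s \ {u, x}) \ A := by_contra fun hpB => hp ⟨hps, hpB⟩
    exact hsep q hqA p hpB hpq.symm

lemma hasIndepCutAwayFrom_of_cover [Finite V] {s₁ s₂ : Set V} (hux : G.Adj u x)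
    (hconn : G.ConnectedIn (s \ {u}))
    (hcount : (G.edgeSet ∩ s.sym2).ncard + 4 ≤ 2 * s.ncard)
    (h₁ : s₁ ⊂ s) (h₂ : s₂ ⊂ s) (hunion : s₁ ∪ s₂ = s) (hinter : s₁ ∩ s₂ = {u, x})
    (hsep : ∀ p ∈ s₁ \ s₂, ∀ q ∈ s₂ \ s₁, ¬ G.Adj p q)
    (ih : ∀ s' ⊂ s, u ∈ s' → G.ConnectedIn (s' \ {u}) →
      (G.edgeSet ∩ s'.sym2).ncard + 4 ≤ 2 * s'.ncard → G.HasIndepCutAwayFrom s' u) :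
    G.HasIndepCutAwayFrom s u := by
  have hE := ncard_edgeSet_inter_sym2_add hsep
  rw [hunion, hinter, edgeSet_inter_sym2_pair hux, ncard_singleton] at hE
  have hV := ncard_union_add_ncard_inter s₁ s₂
  rw [hunion, hinter, ncard_pair hux.ne] at hV
  wlog hc : (G.edgeSet ∩ s₁.sym2).ncard + 4 ≤ 2 * s₁.ncard generalizing s₁ s₂
  · exact this h₂ h₁ (by rwa [union_comm]) (by rwa [inter_comm])
      (fun p hp q hq hpq => hsep q hq p hp hpq.symm) (by omega) (by omega) (by omega)
  have hattach : ∀ p ∈ s \ s₁, ∀ q ∈ s₁, G.Adj p q → q = u ∨ q = x := by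
    intro p hp q hq hpq
    have hp₂ : p ∈ s₂ \ s₁ := ⟨(hunion.symm ▸ hp.1 : p ∈ s₁ ∪ s₂).resolve_left hp.2, hp.2⟩
    have hq₂ : q ∈ s₂ := by_contra fun hq₂ => hsep q ⟨hq, hq₂⟩ p hp₂ hpq.symm
    have hq' : q ∈ ({u, x} : Set V) := hinter ▸ ⟨hq, hq₂⟩
    simpa using hq'
  have hux₁₂ : u ∈ s₁ ∩ s₂ ∧ x ∈ s₁ ∩ s₂ := by simp [hinter]
  refine (ih s₁ h₁ hux₁₂.1.1 ?_ hc).mono h₁.subset fun p hp q hq hpq => ?_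
  · have hs₁ : s₁ \ {u} = (s \ {u}) \ (s \ s₁) := by
      ext v
      have : v ∈ s₁ → v ∈ s := fun hv => h₁.subset hv
      simp only [mem_sdiff, mem_singleton_iff]
      tauto
    rw [hs₁]
    refine hconn.sdiff ⟨h₁.subset hux₁₂.2.1, hux.ne'⟩ (fun h => h.2 hux₁₂.2.1)
      fun p hp q hq hpq => ?_
    have hq₁ : q ∈ s₁ := by_contra fun hq₁ => hq.2 ⟨hq.1.1, hq₁⟩
    exact (hattach p hp q hq₁ hpq).resolve_left hq.1.2
  · exact (hattach p hp q hq hpq).imp_right fun h : q = x => h ▸ hux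

theorem hasIndepCutAwayFrom_of_ncard_edgeSet_le [Finite V] (hu : u ∈ s)
    (hconn : G.ConnectedIn (s \ {u}))
    (hcount : (G.edgeSet ∩ s.sym2).ncard + 4 ≤ 2 * s.ncard) : G.HasIndepCutAwayFrom s u := by
  classical
  induction s using WellFoundedLT.induction generalizing G with
  | ind s ih =>
  by_cases hN : G.IsIndepSet (s ∩ G.neighborSet u)
  · obtain ⟨w, hws, hwu, huw⟩ := exists_not_adj_of_isIndepSet_neighborSet hu hconn hcount hN
    exact hasIndepCutAwayFrom_of_isIndepSet_neighborSet hws hwu huw hN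
  obtain ⟨x, hxs, hux, y, hys, huy, -, hxy⟩ :
      ∃ x ∈ s, G.Adj u x ∧ ∃ y ∈ s, G.Adj u y ∧ x ≠ y ∧ G.Adj x y := by
    simpa [isIndepSet_iff, Set.Pairwise] using hN
  by_cases hc : G.ConnectedIn (s \ {u, x})
  · refine (ih (s \ {x}) (sdiff_singleton_ssubset.2 hxs) ⟨hu, hux.ne⟩ ?_ ?_).of_contractEdge
      hux.ne
    · rw [Set.sdiff_sdiff, singleton_union, pair_comm]
      exact hc.mono fun a ha b hb =>
        contractEdge_adj_of_adj (fun h => ha.2 (.inr h)) (fun h => hb.2 (.inr h))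
    · have := ncard_edgeSet_contractEdge_add_two_le hux huy hxy hu hxs hys
      rw [ncard_sdiff_singleton_of_mem hxs]
      omega
  · have hne : (s \ {u, x}).Nonempty := ⟨y, hys, by simp [huy.ne', hxy.ne']⟩
    obtain ⟨s₁, s₂, h₁, h₂, hunion, hinter, hsep⟩ :=
      exists_cover_of_not_connectedIn hu hxs hne hc
    exact hasIndepCutAwayFrom_of_cover hux hconn hcount h₁ h₂ hunion hinter hsep
      fun s' hs' => ih s' hs'

lemma isVertexCut_boundary {c v : V} (hc : c ∈ C) (hvC : v ∉ C) (hv : v ∉ G.boundary C) :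
    IsVertexCut G (G.boundary C) := by
  refine ⟨⟨c, fun h => h.1 hc⟩, ⟨v, hv⟩, fun hr => hvC ?_⟩
  refine (reachableIn_of_reachable_induce hr).mem_of_closed (fun p hp q hq hpq => ?_) hc
  exact by_contra fun hqC => hq ⟨hqC, p, hp, hpq.symm⟩

end SimpleGraph

/-- If `G` is a `2`-connected graph of order `n` with fewer than `2n - 3` edges, then,
for every vertex `u` of `G`, there is an independent cut `S` of `G` with `u ∉ S`. -/
theorem two_connected_sparse_graph_has_independent_cut_avoiding_vertex
    {V : Type*} [Fintype V] (G : SimpleGraph V) [Fintype G.edgeSet]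
    (h2 : KConnected 2 G)
    (h : (G.edgeFinset.card : ℤ) < 2 * Fintype.card V - 3) (u : V) :
    ∃ S : Set V, IsIndependentCut G S ∧ u ∉ S := by
  have hconn : G.ConnectedIn (Set.univ \ {u}) := by
    simpa [Set.compl_eq_univ_sdiff] using
      SimpleGraph.connectedIn_of_connected_induce (h2.2 {u} (by simp))
  have hcount : (G.edgeSet ∩ Set.univ.sym2).ncard + 4 ≤ 2 * (Set.univ : Set V).ncard := by
    rw [Set.sym2_univ, Set.inter_univ, Set.ncard_univ, Nat.card_eq_fintype_card,
      ← SimpleGraph.coe_edgeFinset, Set.ncard_coe_finset]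
    omega
  obtain ⟨C, -, ⟨c, hc⟩, hCu, hind⟩ :=
    SimpleGraph.hasIndepCutAwayFrom_of_ncard_edgeSet_le (Set.mem_univ u) hconn hcount
  have huS : u ∉ G.boundary C := fun ⟨_, c, hc, huc⟩ => (hCu c hc).2 huc
  rw [Set.univ_inter] at hind
  exact ⟨G.boundary C, ⟨SimpleGraph.isVertexCut_boundary hc (fun hu => (hCu u hu).1 rfl) huS,
    fun a ha b hb hab => hind ha hb hab.ne hab⟩, huS⟩
end

section
/- If G is a 4-connected graph of order n at least 8 that has no forest cut, and u is a vertex of G of degree 4, then at most two neighbors of u have degree 4. -/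
/-- A forest cut is a vertex cut whose induced subgraph is a forest. -/
def IsForestCut {V : Type*} (G : SimpleGraph V) (S : Set V) : Prop :=
  IsVertexCut G S ∧ (G.induce S).IsAcyclic

open Finset SimpleGraph

namespace SimpleGraph

variable {V : Type*} {G : SimpleGraph V}

theorem isVertexCut_of_adj_mem_union {A S : Set V} {a z : V} (ha : a ∈ A) (haS : a ∉ S)
    (hzA : z ∉ A) (hzS : z ∉ S) (hA : ∀ x ∈ A, ∀ y, G.Adj x y → y ∈ A ∪ S) :
    IsVertexCut G S := by
  refine ⟨⟨a, haS⟩, ⟨z, hzS⟩, fun ⟨w⟩ => hzA ?_⟩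
  suffices ∀ {x y : ↥Sᶜ} (w : (G.induce Sᶜ).Walk x y), ↑x ∈ A → ↑y ∈ A from this w ha
  intro x y w
  induction w with
  | nil => exact id
  | @cons _ y _ hxy _ ih => exact fun hx => ih ((hA _ hx _ hxy).resolve_right y.2)

theorem exists_adj_adj_of_not_isAcyclic_induce {S : Set V} (h : ¬ (G.induce S).IsAcyclic) :
    ∃ T ⊆ S, T.Nonempty ∧ ∀ x ∈ T, ∃ y ∈ T, ∃ z ∈ T, y ≠ z ∧ G.Adj x y ∧ G.Adj x z := by
  obtain ⟨v, c, hc⟩ : ∃ v, ∃ c : (G.induce S).Walk v v, c.IsCycle := by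
    simpa [IsAcyclic] using h
  refine ⟨Subtype.val '' c.toSubgraph.verts, by simp,
    ⟨v, v, c.start_mem_verts_toSubgraph, rfl⟩, ?_⟩
  rintro _ ⟨x, hx, rfl⟩
  obtain ⟨y, z, hyz, hN⟩ := Set.ncard_eq_two.1
    (hc.ncard_neighborSet_toSubgraph_eq_two (c.mem_verts_toSubgraph.1 hx))
  have hy : c.toSubgraph.Adj x y := by simp [← Subgraph.mem_neighborSet, hN]
  have hz : c.toSubgraph.Adj x z := by simp [← Subgraph.mem_neighborSet, hN]
  exact ⟨y, ⟨y, hy.snd_mem, rfl⟩, z, ⟨z, hz.snd_mem, rfl⟩, Subtype.val_injective.ne hyz,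
    hy.adj_sub, hz.adj_sub⟩

theorem exists_adj_of_not_isAcyclic_induce {S : Set V} (h : ¬ (G.induce S).IsAcyclic) (d : V) :
    ∃ x ∈ S, ∃ y ∈ S, x ≠ d ∧ y ≠ d ∧ G.Adj x y := by
  obtain ⟨T, hTS, ⟨x, hx⟩, hT⟩ := exists_adj_adj_of_not_isAcyclic_induce h
  have hnbr : ∀ x ∈ T, ∃ y ∈ T, y ≠ d ∧ G.Adj x y := fun x hx => by
    obtain ⟨y, hy, z, hz, hyz, hxy, hxz⟩ := hT x hx
    obtain rfl | hyd := eq_or_ne y d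
    exacts [⟨z, hz, hyz.symm, hxz⟩, ⟨y, hy, hyd, hxy⟩]
  obtain ⟨y, hy, hyd, hxy⟩ := hnbr x hx
  obtain ⟨z, hz, hzd, hyz⟩ := hnbr y hy
  obtain rfl | hxd := eq_or_ne x d
  exacts [⟨y, hTS hy, z, hTS hz, hyd, hzd, hyz⟩, ⟨x, hTS hx, y, hTS hy, hxd, hyd, hxy⟩]

theorem adj_of_not_isAcyclic_induce_of_not_adj {S : Set V} {t p q r : V}
    (hS : S ⊆ {t, p, q, r}) (hq : ¬ G.Adj t q) (hr : ¬ G.Adj t r)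
    (h : ¬ (G.induce S).IsAcyclic) : G.Adj p q ∧ G.Adj p r ∧ G.Adj q r := by
  obtain ⟨T, hTS, ⟨x, hx⟩, hT⟩ := exists_adj_adj_of_not_isAcyclic_induce h
  have hTpqr : ∀ v ∈ T, v = p ∨ v = q ∨ v = r := by
    intro v hv
    obtain ⟨y, hy, z, hz, hyz, hvy, hvz⟩ := hT v hv
    rcases hS (hTS hv) with rfl | hv
    · rcases hS (hTS hy) with rfl | rfl | rfl | rfl <;>
        rcases hS (hTS hz) with rfl | rfl | rfl | rfl <;> simp_all
    · exact hv
  obtain ⟨y, hy, z, hz, hyz, hxy, hxz⟩ := hT x hx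
  obtain ⟨y₁, hy₁, y₂, hy₂, hy₁₂, hyy₁, hyy₂⟩ := hT y hy
  -- `x, y, z` exhaust `{p, q, r}`, so one of the two neighbours `y₁, y₂` of `y` is `z`.
  have := hTpqr x hx; have := hTpqr y hy; have := hTpqr z hz
  have := hTpqr y₁ hy₁; have := hTpqr y₂ hy₂
  grind [Adj.ne, adj_comm]

end SimpleGraph

section Finite

variable {V : Type*} [Fintype V] {G : SimpleGraph V}

theorem KConnected.le_card_of_isVertexCut {k : ℕ} (h : KConnected k G) {S : Finset V}
    (hS : IsVertexCut G S) : k ≤ #S := by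
  by_contra! hlt
  obtain ⟨a, b, hab⟩ := hS
  exact hab ((h.2 S hlt).preconnected a b)

variable [DecidableEq V] [DecidableRel G.Adj]

theorem isVertexCut_of_neighborFinset_subset {A S : Finset V} {a : V} (ha : a ∈ A)
    (haS : a ∉ S) (hA : ∀ x ∈ A, G.neighborFinset x ⊆ A ∪ S)
    (hcard : #A + #S < Fintype.card V) : IsVertexCut G S := by
  obtain ⟨z, -, hz⟩ := exists_mem_notMem_of_card_lt_card ((card_union_le A S).trans_lt hcard)
  rw [mem_union, not_or] at hz
  exact isVertexCut_of_adj_mem_union (A := A) ha haS hz.1 hz.2 fun x hx y hxy => by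
    simpa using hA x hx ((mem_neighborFinset G x y).2 hxy)

theorem adj_iff_of_neighborFinset_eq {v a b c d : V} (hN : G.neighborFinset v = {a, b, c, d})
    (y : V) : G.Adj v y ↔ y = a ∨ y = b ∨ y = c ∨ y = d := by
  rw [← mem_neighborFinset, hN]
  simp

theorem pairwise_ne_of_neighborFinset_eq {v a b c d : V} (hv : G.degree v = 4)
    (hN : G.neighborFinset v = {a, b, c, d}) :
    v ≠ a ∧ v ≠ b ∧ v ≠ c ∧ v ≠ d ∧ a ≠ b ∧ a ≠ c ∧ a ≠ d ∧ b ≠ c ∧ b ≠ d ∧ c ≠ d := by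
  have hvN : v ∉ ({a, b, c, d} : Finset V) := hN ▸ G.notMem_neighborFinset_self v
  have hcard : #{a, b, c, d} = 4 := hN ▸ (G.card_neighborFinset_eq_degree v).trans hv
  grind

theorem neighborFinset_eq_of_adj {v a b c d : V} (hv : G.degree v = 4)
    (hcard : #{a, b, c, d} = 4) (ha : G.Adj v a) (hb : G.Adj v b) (hc : G.Adj v c)
    (hd : G.Adj v d) : G.neighborFinset v = {a, b, c, d} :=
  (eq_of_subset_of_card_le (by simp [insert_subset_iff, *])
    (by rw [hcard, card_neighborFinset_eq_degree, hv])).symm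

theorem exists_neighborFinset_eq_insert_insert {v w t : V} (hv : G.degree v = 4)
    (hw : G.Adj v w) (ht : G.Adj v t) (hwt : w ≠ t) :
    ∃ p q, G.neighborFinset v = {w, t, p, q} := by
  have hsub : {w, t} ⊆ G.neighborFinset v := by simp [insert_subset_iff, hw, ht]
  obtain ⟨p, q, -, hpq⟩ := card_eq_two.1 (show #(G.neighborFinset v \ {w, t}) = 2 by
    rw [card_sdiff_of_subset hsub, card_neighborFinset_eq_degree, hv, card_pair hwt])
  exact ⟨p, q, by rw [← union_sdiff_of_subset hsub, hpq, insert_union, singleton_union]⟩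

theorem exists_neighborFinset_eq_insert_insert_insert {v a b c : V} (hv : G.degree v = 4)
    (ha : G.Adj v a) (hb : G.Adj v b) (hc : G.Adj v c) (hab : a ≠ b) (hac : a ≠ c)
    (hbc : b ≠ c) : ∃ d, G.neighborFinset v = {a, b, c, d} := by
  have hsub : {a, b, c} ⊆ G.neighborFinset v := by simp [insert_subset_iff, ha, hb, hc]
  obtain ⟨d, hd⟩ := card_eq_one.1 (show #(G.neighborFinset v \ {a, b, c}) = 1 by
    rw [card_sdiff_of_subset hsub, card_neighborFinset_eq_degree, hv,
      card_eq_three.2 ⟨a, b, c, hab, hac, hbc, rfl⟩])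
  exact ⟨d, by rw [← union_sdiff_of_subset hsub, hd, insert_union, insert_union, singleton_union]⟩

structure FourConnectedForestCutFree (G : SimpleGraph V) : Prop where
  kConnected : KConnected 4 G
  eight_le_card : 8 ≤ Fintype.card V
  not_isForestCut : ∀ S : Set V, ¬ IsForestCut G S

namespace FourConnectedForestCutFree

theorem three_lt_card_of_neighborFinset_subset (hG : FourConnectedForestCutFree G)
    {A S : Finset V} {a : V} (ha : a ∈ A) (haS : a ∉ S)
    (hA : ∀ x ∈ A, G.neighborFinset x ⊆ A ∪ S) (hcard : #A + #S ≤ 7) : 3 < #S :=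
  hG.kConnected.le_card_of_isVertexCut
    (isVertexCut_of_neighborFinset_subset ha haS hA (by linarith [hG.eight_le_card]))

theorem not_isAcyclic_of_neighborFinset_subset (hG : FourConnectedForestCutFree G)
    {A S : Finset V} {a : V} (ha : a ∈ A) (haS : a ∉ S)
    (hA : ∀ x ∈ A, G.neighborFinset x ⊆ A ∪ S) (hcard : #A + #S ≤ 7) :
    ¬ (G.induce (S : Set V)).IsAcyclic := fun hS =>
  hG.not_isForestCut S
    ⟨isVertexCut_of_neighborFinset_subset ha haS hA (by linarith [hG.eight_le_card]), hS⟩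

theorem not_isAcyclic_induce_neighborFinset (hG : FourConnectedForestCutFree G) {v : V}
    (hv : G.degree v ≤ 6) : ¬ (G.induce (G.neighborFinset v : Set V)).IsAcyclic :=
  hG.not_isAcyclic_of_neighborFinset_subset (A := {v}) (mem_singleton_self v)
    (G.notMem_neighborFinset_self v) (by simp)
    (by rw [card_singleton, card_neighborFinset_eq_degree]; omega)

/-- If `w` saw both `p` and `q`, then `{t, p, q}` would cut off `{v, w}`; if it saw neither,
the cycle in `N(v)` would be the triangle `tpq`, and `{w, p, q}` would cut off `{v, t}`. -/
theorem adj_iff_not_adj_of_neighborFinset_eq (hG : FourConnectedForestCutFree G)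
    {v w t p q : V} (hv : G.degree v = 4) (hw : G.degree w = 4) (ht : G.degree t = 4)
    (hwt : G.Adj w t) (hN : G.neighborFinset v = {w, t, p, q}) :
    G.Adj w p ↔ ¬ G.Adj w q := by
  have hne := pairwise_ne_of_neighborFinset_eq hv hN
  have hadj := adj_iff_of_neighborFinset_eq hN
  constructor
  · intro hwp hwq
    have hNw : G.neighborFinset w = {v, t, p, q} :=
      neighborFinset_eq_of_adj hw (by grind) ((hadj w).2 (by simp)).symm hwt hwp hwq
    exact (hG.three_lt_card_of_neighborFinset_subset (A := {v, w}) (S := {t, p, q}) (a := v)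
      (by simp) (by grind) (by simp [hN, hNw, insert_subset_iff])
      (by grw [card_le_two, card_le_three]; norm_num)).not_ge card_le_three
  · intro hwq
    by_contra hwp
    have hS := hG.not_isAcyclic_induce_neighborFinset (hv.trans_le (by norm_num))
    rw [hN] at hS
    obtain ⟨htp, htq, -⟩ := adj_of_not_isAcyclic_induce_of_not_adj (p := t) (by simp) hwp hwq hS
    have hNt : G.neighborFinset t = {v, w, p, q} :=
      neighborFinset_eq_of_adj ht (by grind) ((hadj t).2 (by simp)).symm hwt.symm htp htq
    exact (hG.three_lt_card_of_neighborFinset_subset (A := {v, t}) (S := {w, p, q}) (a := v)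
      (by simp) (by grind) (by simp [hN, hNt, insert_subset_iff])
      (by grw [card_le_two, card_le_three]; norm_num)).not_ge card_le_three

theorem exists_neighborFinset_eq_of_triangle (hG : FourConnectedForestCutFree G)
    {u a b c d : V} (hu : G.degree u = 4) (ha : G.degree a = 4) (hb : G.degree b = 4)
    (hNu : G.neighborFinset u = {a, b, c, d}) (hab : G.Adj a b) :
    ∃ m x, G.neighborFinset a = {u, b, m, x} ∧ (m = c ∨ m = d) ∧ ¬ G.Adj u x := by
  have hadj := adj_iff_of_neighborFinset_eq hNu
  have hua := (hadj a).2 (by simp)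
  have hub := (hadj b).2 (by simp)
  obtain ⟨p, q, hNa⟩ := exists_neighborFinset_eq_insert_insert ha hua.symm hab hub.ne
  have hne := pairwise_ne_of_neighborFinset_eq ha hNa
  have h := hG.adj_iff_not_adj_of_neighborFinset_eq ha hu hb hub hNa
  by_cases hup : G.Adj u p
  · exact ⟨p, q, hNa, by grind, h.1 hup⟩
  · exact ⟨q, p, by rw [hNa, pair_comm], by grind, hup⟩

/-- `{u, c, xa, xb}` cuts off `{a, b}` and `u` sees only `c` in it, so `c` sees `xa` as well as
`u`, which the triangle `acb` forbids. -/
theorem false_of_clique_of_degree_four (hG : FourConnectedForestCutFree G)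
    {u a b c d xa xb : V} (hu : G.degree u = 4) (ha : G.degree a = 4) (hb : G.degree b = 4)
    (hc : G.degree c = 4) (hNu : G.neighborFinset u = {a, b, c, d})
    (hNa : G.neighborFinset a = {u, b, c, xa}) (hNb : G.neighborFinset b = {u, a, c, xb})
    (huxa : ¬ G.Adj u xa) (huxb : ¬ G.Adj u xb) : False := by
  have hadj := adj_iff_of_neighborFinset_eq hNu
  have hneu := pairwise_ne_of_neighborFinset_eq hu hNu
  have hS := hG.not_isAcyclic_of_neighborFinset_subset (A := {a, b}) (S := {u, c, xa, xb})
    (a := a) (by simp) (by grind) (by simp [hNa, hNb, insert_subset_iff])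
    (by grw [card_le_two, card_le_four]; norm_num)
  obtain ⟨hcxa, -, -⟩ := adj_of_not_isAcyclic_induce_of_not_adj (p := c) (by simp) huxa huxb hS
  have hbc : G.Adj b c := (adj_iff_of_neighborFinset_eq hNb c).2 (by simp)
  have hNa' : G.neighborFinset a = {c, b, u, xa} := by
    rw [hNa]; ext; simp only [mem_insert, mem_singleton]; tauto
  exact (hG.adj_iff_not_adj_of_neighborFinset_eq ha hc hb hbc.symm hNa').1
    ((hadj c).2 (by simp)).symm hcxa

/-- `{b, d, c, xa}` cuts off `{u, a}` and `b` sees only `d` in it, so `c` sees `xa`; likewise `c`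
sees `xb`. Then `N(c) = {u, d, xa, xb}` and `{d, xa, xb}` cuts off `{u, a, b, c}`. -/
theorem false_of_clique_and_degree_four_neighbor (hG : FourConnectedForestCutFree G)
    {u a b c d xa xb : V} (hu : G.degree u = 4) (ha : G.degree a = 4) (hb : G.degree b = 4)
    (hc : G.degree c = 4) (hNu : G.neighborFinset u = {a, b, c, d})
    (hNa : G.neighborFinset a = {u, b, d, xa}) (hNb : G.neighborFinset b = {u, a, d, xb})
    (huxa : ¬ G.Adj u xa) (huxb : ¬ G.Adj u xb) (hx : xa ≠ xb) : False := by
  have hadj := adj_iff_of_neighborFinset_eq hNu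
  have hadja := adj_iff_of_neighborFinset_eq hNa
  have hadjb := adj_iff_of_neighborFinset_eq hNb
  have hneu := pairwise_ne_of_neighborFinset_eq hu hNu
  have hnea := pairwise_ne_of_neighborFinset_eq ha hNa
  have hneb := pairwise_ne_of_neighborFinset_eq hb hNb
  have hSa := hG.not_isAcyclic_of_neighborFinset_subset (A := {u, a}) (S := {b, d, c, xa})
    (a := u) (by simp) (by grind) (by simp [hNu, hNa, insert_subset_iff])
    (by grw [card_le_two, card_le_four]; norm_num)
  obtain ⟨hdc, -, hcxa⟩ := adj_of_not_isAcyclic_induce_of_not_adj (t := b) (p := d) (q := c)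
    (r := xa) (by simp) (by grind) (by grind) hSa
  have hSb := hG.not_isAcyclic_of_neighborFinset_subset (A := {u, b}) (S := {a, d, c, xb})
    (a := u) (by simp) (by grind) (by simp [hNu, hNb, insert_subset_iff])
    (by grw [card_le_two, card_le_four]; norm_num)
  obtain ⟨-, -, hcxb⟩ := adj_of_not_isAcyclic_induce_of_not_adj (t := a) (p := d) (q := c)
    (r := xb) (by simp) (by grind) (by grind) hSb
  have hNc : G.neighborFinset c = {u, d, xa, xb} :=
    neighborFinset_eq_of_adj hc (by grind) ((hadj c).2 (by simp)).symm hdc.symm hcxa hcxb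
  exact (hG.three_lt_card_of_neighborFinset_subset (A := {u, a, b, c}) (S := {d, xa, xb})
    (a := u) (by simp) (by grind) (by simp [hNu, hNa, hNb, hNc, insert_subset_iff])
    (by grw [card_le_four, card_le_three])).not_ge card_le_three

theorem false_of_adj_of_degree_four (hG : FourConnectedForestCutFree G) {u a b c d : V}
    (hu : G.degree u = 4) (ha : G.degree a = 4) (hb : G.degree b = 4) (hc : G.degree c = 4)
    (hNu : G.neighborFinset u = {a, b, c, d}) (hab : G.Adj a b) : False := by
  obtain ⟨ma, xa, hNa, hma, huxa⟩ := hG.exists_neighborFinset_eq_of_triangle hu ha hb hNu hab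
  obtain ⟨mb, xb, hNb, hmb, huxb⟩ :=
    hG.exists_neighborFinset_eq_of_triangle hu hb ha (by rw [hNu, insert_comm]) hab.symm
  have hadj := adj_iff_of_neighborFinset_eq hNu
  have hadjb := adj_iff_of_neighborFinset_eq hNb
  have hneu := pairwise_ne_of_neighborFinset_eq hu hNu
  have hnea := pairwise_ne_of_neighborFinset_eq ha hNa
  by_cases hx : xa = xb
  · subst hx
    refine (hG.three_lt_card_of_neighborFinset_subset (A := {u, a, b}) (S := {c, d, xa})
      (a := u) (by simp) (by grind) ?_ (by grw [card_le_three, card_le_three]; norm_num)).not_ge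
      card_le_three
    rcases hma with rfl | rfl <;> rcases hmb with rfl | rfl <;>
      simp [hNu, hNa, hNb, insert_subset_iff]
  -- in the triangle `abu`, the vertex `b` sees exactly one of `ma, xa`, and `xa ∉ N(b)`
  obtain rfl : ma = mb := by
    have := hG.adj_iff_not_adj_of_neighborFinset_eq ha hb hu ((hadj b).2 (by simp)).symm
      (by rw [hNa, insert_comm])
    grind
  rcases hma with rfl | rfl
  · exact hG.false_of_clique_of_degree_four hu ha hb hc hNu hNa hNb huxa huxb
  · exact hG.false_of_clique_and_degree_four_neighbor hu ha hb hc hNu hNa hNb huxa huxb hx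

end FourConnectedForestCutFree

end Finite

/-- In a `4`-connected graph of order at least `8` with no forest cut, every vertex of
degree `4` has at most two neighbors of degree `4`. -/
theorem degree_four_vertex_has_at_most_two_degree_four_neighbors
    {V : Type*} [Fintype V] [DecidableEq V] (G : SimpleGraph V) [DecidableRel G.Adj]
    (hconn : KConnected 4 G) (hn : 8 ≤ Fintype.card V)
    (hnf : ¬ ∃ S : Set V, IsForestCut G S)
    (u : V) (hu : G.degree u = 4) :
    ((G.neighborFinset u).filter (fun v => G.degree v = 4)).card ≤ 2 := by
  have hG : FourConnectedForestCutFree G := ⟨hconn, hn, fun S hS => hnf ⟨S, hS⟩⟩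
  by_contra! hF
  have : Nonempty V := ⟨u⟩
  obtain ⟨d, hd⟩ :
      ∃ d, G.neighborFinset u \ (G.neighborFinset u).filter (G.degree · = 4) ⊆ {d} := by
    refine card_le_one_iff_subset_singleton.1 ?_
    rw [card_sdiff_of_subset (filter_subset _ _), card_neighborFinset_eq_degree, hu]
    omega
  have hdeg : ∀ v ∈ G.neighborFinset u, v ≠ d → G.Adj u v ∧ G.degree v = 4 := by
    intro v hv hvd
    by_contra hvF
    exact hvd (mem_singleton.1 (hd (mem_sdiff.2 ⟨hv, by simpa using hvF⟩)))
  obtain ⟨a, ha, b, hb, had, hbd, hab⟩ := exists_adj_of_not_isAcyclic_induce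
    (hG.not_isAcyclic_induce_neighborFinset (hu.trans_le (by norm_num))) d
  obtain ⟨hua, ha4⟩ := hdeg a ha had
  obtain ⟨hub, hb4⟩ := hdeg b hb hbd
  obtain ⟨c, hc, hcab⟩ := exists_mem_notMem_of_card_lt_card (card_le_two.trans_lt hF)
  rw [mem_insert, mem_singleton, not_or] at hcab
  rw [mem_filter, mem_neighborFinset] at hc
  obtain ⟨d', hNu⟩ := exists_neighborFinset_eq_insert_insert_insert hu hua hub hc.1 hab.ne
    (Ne.symm hcab.1) (Ne.symm hcab.2)
  exact hG.false_of_adj_of_degree_four hu ha4 hb4 hc.2 hNu hab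
end

section
/- Let n be an integer with n at least 8. Let n_4, n_5, ..., n_{n-1}, and n_4^5, n_4^6, ..., n_4^{n-1}, and a, b be nonnegative real numbers satisfying: (i) n_4 + n_5 + ... + n_{n-1} = n; (ii) n_4 = n_4^5 + n_4^6 + ... + n_4^{n-1}; (iii) n_4^6 = a + b; (iv) 5 n_5 + 6 n_6 + ... + (n-1) n_{n-1} >= 2 n_4; (v) 4 n_5 >= 3 n_4^5 + a; (vi) 6 n_6 >= a + 2b; (vii) j n_j >= n_4^j for every j in {7, ..., n-1}. Then (1/2) * (4 n_4 + 5 n_5 + ... + (n-1) n_{n-1}) >= (11/5) n. -/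
/-- The optimal value of the linear program `(P)` is at least `(11/5) n`:
a purely arithmetic inequality about nonnegative reals `f i = nᵢ` (for `4 ≤ i ≤ n-1`),
`g j = n₄ʲ` (for `5 ≤ j ≤ n-1`), `a = n₄⁶'`, and `b = n₄⁶''`. -/
theorem lp_optimal_value_bound (n : ℕ) (hn : 8 ≤ n)
    (f g : ℕ → ℝ) (a b : ℝ)
    (hf : ∀ i ∈ Finset.Icc 4 (n - 1), 0 ≤ f i)
    (hg : ∀ j ∈ Finset.Icc 5 (n - 1), 0 ≤ g j)
    (ha : 0 ≤ a) (hb : 0 ≤ b)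
    (h1 : ∑ i ∈ Finset.Icc 4 (n - 1), f i = n)
    (h2 : f 4 = ∑ j ∈ Finset.Icc 5 (n - 1), g j)
    (h3 : g 6 = a + b)
    (h4 : 2 * f 4 ≤ ∑ i ∈ Finset.Icc 5 (n - 1), (i : ℝ) * f i)
    (h5 : 3 * g 5 + a ≤ 4 * f 5)
    (h6 : a + 2 * b ≤ 6 * f 6)
    (h7 : ∀ j ∈ Finset.Icc 7 (n - 1), g j ≤ (j : ℝ) * f j) :
    11 / 5 * n ≤ 1 / 2 * ∑ i ∈ Finset.Icc 4 (n - 1), (i : ℝ) * f i := by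
  have e4 : Finset.Icc 4 (n-1) = insert 4 (insert 5 (insert 6 (Finset.Icc 7 (n-1)))) := by
    ext x; simp only [Finset.mem_Icc, Finset.mem_insert]; omega
  have e5 : Finset.Icc 5 (n-1) = insert 5 (insert 6 (Finset.Icc 7 (n-1))) := by
    ext x; simp only [Finset.mem_Icc, Finset.mem_insert]; omega
  have m4 : (4:ℕ) ∉ insert 5 (insert 6 (Finset.Icc 7 (n-1))) := by
    simp [Finset.mem_Icc]
  have m5 : (5:ℕ) ∉ insert 6 (Finset.Icc 7 (n-1)) := by
    simp [Finset.mem_Icc]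
  have m6 : (6:ℕ) ∉ Finset.Icc 7 (n-1) := by
    simp [Finset.mem_Icc]
  rw [e4] at h1 ⊢
  rw [e5] at h2 h4
  rw [Finset.sum_insert m4, Finset.sum_insert m5, Finset.sum_insert m6] at h1 ⊢
  rw [Finset.sum_insert m5, Finset.sum_insert m6] at h2 h4
  have I1 : ∑ j ∈ Finset.Icc 7 (n-1), g j ≤ ∑ j ∈ Finset.Icc 7 (n-1), (j:ℝ) * f j :=
    Finset.sum_le_sum h7
  have I2 : (7:ℝ) * ∑ j ∈ Finset.Icc 7 (n-1), f j ≤ ∑ j ∈ Finset.Icc 7 (n-1), (j:ℝ) * f j := by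
    rw [Finset.mul_sum]
    apply Finset.sum_le_sum
    intro j hj
    rw [Finset.mem_Icc] at hj
    have hj7 : (7:ℝ) ≤ (j:ℝ) := by exact_mod_cast hj.1
    have hfj : 0 ≤ f j := hf j (by rw [Finset.mem_Icc]; omega)
    nlinarith
  have hf5 : 0 ≤ f 5 := hf 5 (by rw [Finset.mem_Icc]; omega)
  have hf6 : 0 ≤ f 6 := hf 6 (by rw [Finset.mem_Icc]; omega)
  push_cast at h1 h4 ⊢
  linarith [h1, h2, h3, h4, h5, h6, I1, I2, hb, hf6]
end

section
/- If G is a graph of order at least 4 that has no forest cut, then G is 3-connected and, for every vertex u of G, the subgraph of G induced by the neighborhood N_G(u) contains a cycle. -/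
/-- A graph that is not acyclic has three pairwise distinct vertices. -/
lemma exists_three_of_not_acyclic {W : Type*} {G : SimpleGraph W} (h : ¬ G.IsAcyclic) :
    ∃ a b c : W, a ≠ b ∧ a ≠ c ∧ b ≠ c := by
  unfold SimpleGraph.IsAcyclic at h
  push_neg at h
  obtain ⟨v, c, hc⟩ := h
  have hlen : 3 ≤ c.length := hc.three_le_length
  have hnodup : c.support.tail.Nodup := hc.support_nodup
  have hlt : c.length = c.support.tail.length := by
    have := c.length_support
    simp [List.length_tail, this]
  set l := c.support.tail with hl
  have h0 : 0 < l.length := by omega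
  have h1 : 1 < l.length := by omega
  have h2 : 2 < l.length := by omega
  refine ⟨l.get ⟨0, h0⟩, l.get ⟨1, h1⟩, l.get ⟨2, h2⟩, ?_, ?_, ?_⟩ <;>
    · intro he
      have := (hnodup.get_inj_iff).1 he
      simp at this

/-- Any induced subgraph on at most two vertices is acyclic. -/
lemma acyclic_of_ncard_le_two {V : Type*} [Fintype V] (G : SimpleGraph V) (s : Set V)
    (h : s.ncard ≤ 2) : (G.induce s).IsAcyclic := by
  by_contra hc
  obtain ⟨a, b, c, hab, hac, hbc⟩ := exists_three_of_not_acyclic hc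
  have : 2 < s.ncard := by
    refine (Set.two_lt_ncard s.toFinite).2 ⟨a, a.2, b, b.2, c, c.2, ?_, ?_, ?_⟩ <;>
      exact fun e => by first
        | exact hab (Subtype.ext e)
        | exact hac (Subtype.ext e)
        | exact hbc (Subtype.ext e)
  omega

/-- If all neighbors of `v` lie in `S`, then `v` cannot reach any other vertex outside `S`. -/
lemma unreachable_aux {V : Type*} {G : SimpleGraph V} {S : Set V} {v w : V}
    (hv : v ∈ Sᶜ) (hw : w ∈ Sᶜ) (hvw : v ≠ w) (hN : ∀ y, G.Adj v y → y ∈ S) :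
    ¬ (G.induce Sᶜ).Reachable ⟨v, hv⟩ ⟨w, hw⟩ := by
  rintro ⟨p⟩
  cases p with
  | nil => exact hvw rfl
  | cons h q =>
    rename_i x
    have hadj : G.Adj v x.val := h
    exact x.2 (hN _ hadj)

/-- In a graph where every vertex has at most one neighbor, reachable vertices
are equal or adjacent. -/
lemma matching_reachable {W : Type*} {G : SimpleGraph W}
    (hm : ∀ x a b : W, G.Adj x a → G.Adj x b → a = b) {v w : W} (h : G.Reachable v w) :
    v = w ∨ G.Adj v w := by
  obtain ⟨p⟩ := h
  induction p with
  | nil => exact Or.inl rfl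
  | cons h q ih =>
    rcases ih with rfl | hadj
    · exact Or.inr h
    · exact Or.inl (hm _ _ _ h.symm hadj)

/-- If `x` has two distinct neighbors `a ≠ b` joined by a walk avoiding `x`,
then the graph has a cycle. -/
lemma not_acyclic_of_branch {W : Type*} {G : SimpleGraph W} {x a b : W}
    (hab : a ≠ b) (hxa : G.Adj x a) (hxb : G.Adj x b)
    (p : G.Walk a b) (hx : x ∉ p.support) : ¬ G.IsAcyclic := by
  classical
  intro hG
  set q := p.toPath with hq
  have hxq : x ∉ (q : G.Walk a b).support := fun h => hx (p.support_toPath_subset h)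
  have hq1 : (SimpleGraph.Walk.cons hxa (q : G.Walk a b)).IsPath := by
    rw [SimpleGraph.Walk.cons_isPath_iff]; exact ⟨q.2, hxq⟩
  have hq2 : (SimpleGraph.Walk.cons hxb SimpleGraph.Walk.nil).IsPath := by simp [hxb.ne]
  have heq := hG.path_unique ⟨_, hq1⟩ ⟨_, hq2⟩
  have hlen := congrArg (fun r : G.Path x b => (r : G.Walk x b).length) heq
  simp only [SimpleGraph.Walk.length_cons, SimpleGraph.Walk.length_nil] at hlen
  exact hab (SimpleGraph.Walk.eq_of_length_eq_zero (p := (q : G.Walk a b)) (by omega))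

/-- If `G` is a graph of order at least `4` with no forest cut, then `G` is
`3`-connected and every neighborhood induces a subgraph containing a cycle. -/
theorem no_forest_cut_implies_three_connected_and_cyclic_neighborhoods
    {V : Type*} [Fintype V] (G : SimpleGraph V)
    (hn : 4 ≤ Fintype.card V)
    (hnf : ¬ ∃ S : Set V, IsForestCut G S) :
    KConnected 3 G ∧ ∀ u : V, ¬ (G.induce (G.neighborSet u)).IsAcyclic := by
  classical
  -- Claim: if the neighborhood of `v` induces a forest, then `v` dominates `G`.
  have claimC : ∀ v : V, (G.induce (G.neighborSet v)).IsAcyclic →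
      ∀ w : V, w = v ∨ G.Adj v w := by
    intro v hv w
    by_contra hw
    push_neg at hw
    obtain ⟨hwv, hadj⟩ := hw
    refine hnf ⟨G.neighborSet v, ⟨⟨v, ?_⟩, ⟨w, ?_⟩, ?_⟩, hv⟩
    · simp
    · simpa using hadj
    · exact unreachable_aux _ _ (Ne.symm hwv) (fun y hy => hy)
  have hconn : KConnected 3 G := by
    refine ⟨by omega, ?_⟩
    intro S hS
    rw [SimpleGraph.connected_iff]
    constructor
    · by_contra hpre
      unfold SimpleGraph.Preconnected at hpre
      push_neg at hpre
      obtain ⟨a, b, hab⟩ := hpre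
      refine hnf ⟨↑S, ⟨a, b, hab⟩, acyclic_of_ncard_le_two G _ ?_⟩
      rw [Set.ncard_coe_finset]; omega
    · have hv : ∃ v, v ∉ S := by
        by_contra h
        push_neg at h
        have : S = Finset.univ := Finset.eq_univ_of_forall h
        rw [this, Finset.card_univ] at hS
        omega
      obtain ⟨v, hv⟩ := hv
      exact ⟨⟨v, by simpa using hv⟩⟩
  refine ⟨hconn, fun u hF => ?_⟩
  have hdom := claimC u hF
  have hset : G.neighborSet u = ({u} : Set V)ᶜ := by
    ext w
    simp only [SimpleGraph.mem_neighborSet, Set.mem_compl_iff, Set.mem_singleton_iff]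
    constructor
    · intro h hw; exact G.irrefl (hw ▸ h)
    · intro h
      rcases hdom w with rfl | h2
      · exact absurd rfl h
      · exact h2
  have hn3 : 2 < (G.neighborSet u).ncard := by
    have hc := Set.ncard_add_ncard_compl ({u} : Set V)
    rw [Set.ncard_singleton, Nat.card_eq_fintype_card] at hc
    rw [hset]; omega
  obtain ⟨a0, ha0, b0, hb0, c0, hc0, hab0, hac0, hbc0⟩ :=
    (Set.two_lt_ncard (G.neighborSet u).toFinite).1 hn3
  by_cases hpre : (G.induce (G.neighborSet u)).Preconnected
  · by_cases hm : ∀ x p q : ↥(G.neighborSet u),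
        (G.induce (G.neighborSet u)).Adj x p → (G.induce (G.neighborSet u)).Adj x q → p = q
    · rcases matching_reachable hm (hpre ⟨a0, ha0⟩ ⟨b0, hb0⟩) with h1 | h1
      · exact hab0 (congrArg Subtype.val h1)
      rcases matching_reachable hm (hpre ⟨a0, ha0⟩ ⟨c0, hc0⟩) with h2 | h2
      · exact hac0 (congrArg Subtype.val h2)
      exact hbc0 (congrArg Subtype.val (hm _ _ _ h1 h2))
    · push_neg at hm
      obtain ⟨x, p, q, hxp, hxq, hpq⟩ := hm
      set T : Set V := {u, x.val} with hT
      have hmemT : ∀ y : ↥(G.neighborSet u), y.val ≠ x.val → y.val ∈ Tᶜ := by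
        intro y hyx
        simp only [hT, Set.mem_compl_iff, Set.mem_insert_iff, Set.mem_singleton_iff]
        push_neg
        refine ⟨?_, hyx⟩
        intro hyu
        have := y.2
        rw [hyu] at this
        exact G.irrefl this
      have hpT : p.val ∈ Tᶜ := hmemT p (fun e => (G.induce _).ne_of_adj hxp (Subtype.ext e.symm))
      have hqT : q.val ∈ Tᶜ := hmemT q (fun e => (G.induce _).ne_of_adj hxq (Subtype.ext e.symm))
      refine hnf ⟨T, ⟨⟨p.val, hpT⟩, ⟨q.val, hqT⟩, ?_⟩, acyclic_of_ncard_le_two G _ ?_⟩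
      · intro hreach
        obtain ⟨w⟩ := hreach
        have hmap : ∀ y : ↥(Tᶜ), (y : V) ∈ G.neighborSet u := by
          intro y
          have hy := y.2
          rw [hset]
          intro hyu
          simp only [Set.mem_singleton_iff] at hyu
          exact hy (Set.mem_insert_iff.2 (Or.inl hyu))
        let φ : G.induce Tᶜ →g G.induce (G.neighborSet u) :=
          ⟨fun y => ⟨y, hmap y⟩, fun {a b} h => h⟩
        have hxs : x ∉ ((w.map φ).copy (Subtype.ext rfl) (Subtype.ext rfl) :
            (G.induce (G.neighborSet u)).Walk p q).support := by
          rw [SimpleGraph.Walk.support_copy, SimpleGraph.Walk.support_map]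
          intro hmem
          obtain ⟨z, hz, hzx⟩ := List.mem_map.1 hmem
          have hzz : (z : V) = x.val := congrArg Subtype.val hzx
          exact z.2 (Set.mem_insert_iff.2 (Or.inr (Set.mem_singleton_iff.2 hzz)))
        exact not_acyclic_of_branch hpq hxp hxq _ hxs hF
      · calc T.ncard ≤ ({x.val} : Set V).ncard + 1 := Set.ncard_insert_le _ _
          _ ≤ 2 := by rw [Set.ncard_singleton]
  · unfold SimpleGraph.Preconnected at hpre
    push_neg at hpre
    obtain ⟨a, b, hab⟩ := hpre
    refine hnf ⟨{u}, ?_, acyclic_of_ncard_le_two G _ (by rw [Set.ncard_singleton]; omega)⟩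
    unfold IsVertexCut
    rw [show (({u} : Set V)ᶜ) = G.neighborSet u from hset.symm]
    exact ⟨a, b, hab⟩
end

section
/- For every integer k at least 2, let G be the graph that arises from a cycle x_1 x_2 ... x_{2k} x_1 of order 2k by adding the k edges x_1 x_{k+1}, x_2 x_{k+2}, ..., x_k x_{2k}, and adding one further vertex y adjacent to all of x_1, ..., x_{2k}. Then G is 4-connected, has order n = 2k+1, and has exactly 5k = (5/2)(n-1) edges, and the vertex y belongs to every vertex cut of G. -/
/-- The graph arising from the cycle `x₀ x₁ … x_{2k-1} x₀` by adding the `k` "diagonal"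
edges `xᵢ x_{i+k}` (indices mod `2k`) and one further vertex `y = Sum.inr ()` adjacent
to all of `x₀, …, x_{2k-1}`. -/
def wheelLikeGraph (k : ℕ) : SimpleGraph (Fin (2 * k) ⊕ Unit) :=
  SimpleGraph.fromRel fun p q =>
    match p, q with
    | Sum.inl i, Sum.inl j =>
        ((i : ℕ) + 1) % (2 * k) = (j : ℕ) ∨ ((i : ℕ) + k) % (2 * k) = (j : ℕ)
    | Sum.inl _, Sum.inr _ => True
    | _, _ => False

namespace WheelAux

open Sum

variable {k : ℕ}

/-- rotate a vertex of the cycle by `t` steps -/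
def rot (u : Fin (2*k)) (t : ℕ) : Fin (2*k) :=
  ⟨(u.val + t) % (2*k), Nat.mod_lt _ (lt_of_le_of_lt (Nat.zero_le _) u.isLt)⟩

@[simp] lemma rot_val (u : Fin (2*k)) (t : ℕ) : (rot u t).val = (u.val + t) % (2*k) := rfl

lemma rot_zero (u : Fin (2*k)) : rot u 0 = u :=
  Fin.ext (by simp [Nat.mod_eq_of_lt u.isLt])

lemma rot_rot (u : Fin (2*k)) (s t : ℕ) : rot (rot u s) t = rot u (s+t) :=
  Fin.ext (by simp [Nat.mod_add_mod, Nat.add_assoc])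

lemma rot_cycle (u : Fin (2*k)) : rot u (2*k) = u :=
  Fin.ext (by simp [Nat.add_mod_right, Nat.mod_eq_of_lt u.isLt])

lemma rot_inj {u : Fin (2*k)} {s t : ℕ} (hs : s < 2*k) (ht : t < 2*k)
    (h : rot u s = rot u t) : s = t := by
  have h2 : (u.val + s) % (2*k) = (u.val + t) % (2*k) := congrArg Fin.val h
  have h3 : s ≡ t [MOD 2*k] := Nat.ModEq.add_left_cancel' u.val h2
  rwa [Nat.ModEq, Nat.mod_eq_of_lt hs, Nat.mod_eq_of_lt ht] at h3

lemma wheel_adj_inl_inl (i j : Fin (2*k)) :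
    (wheelLikeGraph k).Adj (inl i) (inl j) ↔ i ≠ j ∧
      (((i:ℕ)+1) % (2*k) = j ∨ ((i:ℕ)+k) % (2*k) = j ∨
       ((j:ℕ)+1) % (2*k) = i ∨ ((j:ℕ)+k) % (2*k) = i) := by
  simp [wheelLikeGraph, SimpleGraph.fromRel_adj]
  tauto

lemma adj_rot_one (hk : 2 ≤ k) (u : Fin (2*k)) :
    (wheelLikeGraph k).Adj (inl u) (inl (rot u 1)) := by
  rw [wheel_adj_inl_inl]
  refine ⟨fun h => ?_, Or.inl rfl⟩
  have h0 : rot u 0 = rot u 1 := by rw [rot_zero]; exact h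
  have := rot_inj (by omega) (by omega) h0
  omega

lemma adj_rot_k (hk : 2 ≤ k) (u : Fin (2*k)) :
    (wheelLikeGraph k).Adj (inl u) (inl (rot u k)) := by
  rw [wheel_adj_inl_inl]
  constructor
  · intro h
    have h0 : rot u 0 = rot u k := by rw [rot_zero]; exact h
    have := rot_inj (by omega) (by omega) h0
    omega
  · exact Or.inr (Or.inl rfl)

lemma adj_inr (i : Fin (2*k)) : (wheelLikeGraph k).Adj (inl i) (inr ()) := by
  simp [wheelLikeGraph, SimpleGraph.fromRel_adj]

lemma reach_congr {W : Type*} {G : SimpleGraph W} {a b a' b' : W}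
    (ha : a = a') (hb : b = b') (h : G.Reachable a b) : G.Reachable a' b' := by
  subst ha; subst hb; exact h

lemma reach_arc (hk : 2 ≤ k) (S : Set (Fin (2*k) ⊕ Unit)) (u : Fin (2*k)) (d : ℕ)
    (h : ∀ t, t ≤ d → (inl (rot u t) : Fin (2*k) ⊕ Unit) ∈ Sᶜ) :
    ((wheelLikeGraph k).induce Sᶜ).Reachable ⟨inl (rot u 0), h 0 (Nat.zero_le _)⟩
      ⟨inl (rot u d), h d le_rfl⟩ := by
  induction d with
  | zero => exact SimpleGraph.Reachable.refl _
  | succ d ih =>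
    refine (ih (fun t ht => h t (le_trans ht (Nat.le_succ d)))).trans ?_
    have hadj : (wheelLikeGraph k).Adj (inl (rot u d)) (inl (rot u (d+1))) := by
      have := adj_rot_one hk (rot u d)
      rwa [rot_rot] at this
    exact SimpleGraph.Adj.reachable hadj

lemma reach_between (hk : 2 ≤ k) (S : Set (Fin (2*k) ⊕ Unit)) (c : Fin (2*k)) (s t : ℕ)
    (h : ∀ m, min s t ≤ m → m ≤ max s t → (inl (rot c m) : Fin (2*k) ⊕ Unit) ∈ Sᶜ)
    (hs : (inl (rot c s) : Fin (2*k) ⊕ Unit) ∈ Sᶜ)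
    (ht : (inl (rot c t) : Fin (2*k) ⊕ Unit) ∈ Sᶜ) :
    ((wheelLikeGraph k).induce Sᶜ).Reachable ⟨inl (rot c s), hs⟩ ⟨inl (rot c t), ht⟩ := by
  rcases le_total s t with hst | hst
  · have key := reach_arc hk S (rot c s) (t - s) (fun r hr => by
      rw [rot_rot]; exact h (s+r) (by omega) (by omega))
    exact reach_congr (Subtype.ext (congrArg inl (by rw [rot_rot, Nat.add_zero])))
      (Subtype.ext (congrArg inl (by rw [rot_rot]; congr 1; omega))) key
  · have key := reach_arc hk S (rot c t) (s - t) (fun r hr => by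
      rw [rot_rot]; exact h (t+r) (by omega) (by omega))
    exact (reach_congr (Subtype.ext (congrArg inl (by rw [rot_rot, Nat.add_zero])))
      (Subtype.ext (congrArg inl (by rw [rot_rot]; congr 1; omega))) key).symm

lemma reach_hub (S : Set (Fin (2*k) ⊕ Unit)) (hy : (inr () : Fin (2*k) ⊕ Unit) ∈ Sᶜ)
    (a : ↥Sᶜ) : ((wheelLikeGraph k).induce Sᶜ).Reachable a ⟨inr (), hy⟩ := by
  obtain ⟨x, hx⟩ := a
  match x, hx with
  | inr (), hx => exact SimpleGraph.Reachable.refl _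
  | inl i, hx => exact SimpleGraph.Adj.reachable (adj_inr i)

lemma main_reach (hk : 2 ≤ k) (S : Set (Fin (2*k) ⊕ Unit))
    (hA : ∀ a b c : Fin (2*k), (inl a : Fin (2*k) ⊕ Unit) ∈ S →
      (inl b : Fin (2*k) ⊕ Unit) ∈ S → (inl c : Fin (2*k) ⊕ Unit) ∈ S →
      a = b ∨ a = c ∨ b = c)
    (u v : Fin (2*k)) (hu : (inl u : Fin (2*k) ⊕ Unit) ∈ Sᶜ)
    (hv : (inl v : Fin (2*k) ⊕ Unit) ∈ Sᶜ) :
    ((wheelLikeGraph k).induce Sᶜ).Reachable ⟨inl u, hu⟩ ⟨inl v, hv⟩ := by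
  have hn : 4 ≤ 2*k := by omega
  by_cases huv : u = v
  · subst huv; exact SimpleGraph.Reachable.refl _
  obtain ⟨d, hd⟩ : ∃ x, x = (2*k + v.val - u.val) % (2*k) := ⟨_, rfl⟩
  have hun : u.val < 2*k := u.isLt
  have hvn : v.val < 2*k := v.isLt
  have hdn : d < 2*k := by rw [hd]; exact Nat.mod_lt _ (by omega)
  have hrotuv : rot u d = v := by
    apply Fin.ext
    rw [rot_val, hd]
    rcases le_or_gt u.val v.val with h | h
    · have e1 : (2*k + v.val - u.val) % (2*k) = v.val - u.val := by
        rw [Nat.mod_eq_sub_mod (by omega),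
          show 2*k + v.val - u.val - 2*k = v.val - u.val by omega,
          Nat.mod_eq_of_lt (by omega)]
      rw [e1, show u.val + (v.val - u.val) = v.val by omega, Nat.mod_eq_of_lt hvn]
    · have e1 : (2*k + v.val - u.val) % (2*k) = 2*k + v.val - u.val :=
        Nat.mod_eq_of_lt (by omega)
      rw [e1, show u.val + (2*k + v.val - u.val) = v.val + 2*k by omega, Nat.add_mod_right,
        Nat.mod_eq_of_lt hvn]
  have hd1 : 1 ≤ d := by
    rcases Nat.eq_zero_or_pos d with h0 | h0
    · exfalso; apply huv
      have := hrotuv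
      rw [h0, rot_zero] at this
      exact this.symm ▸ rfl
    · exact h0
  have hrotvu : rot v (2*k - d) = u := by
    rw [← hrotuv, rot_rot, show d + (2*k - d) = 2*k by omega]
    exact rot_cycle u
  by_cases hfwd : ∀ t, 1 ≤ t → t ≤ d - 1 → (inl (rot u t) : Fin (2*k) ⊕ Unit) ∈ Sᶜ
  · have h : ∀ t, t ≤ d → (inl (rot u t) : Fin (2*k) ⊕ Unit) ∈ Sᶜ := by
      intro t ht
      rcases Nat.eq_zero_or_pos t with rfl | h1
      · rw [rot_zero]; exact hu
      rcases eq_or_lt_of_le ht with rfl | h2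
      · rw [hrotuv]; exact hv
      · exact hfwd t h1 (by omega)
    exact reach_congr (Subtype.ext (congrArg inl (rot_zero u)))
      (Subtype.ext (congrArg inl hrotuv)) (reach_arc hk S u d h)
  by_cases hbwd : ∀ t, 1 ≤ t → t ≤ (2*k - d) - 1 → (inl (rot v t) : Fin (2*k) ⊕ Unit) ∈ Sᶜ
  · have h : ∀ t, t ≤ 2*k - d → (inl (rot v t) : Fin (2*k) ⊕ Unit) ∈ Sᶜ := by
      intro t ht
      rcases Nat.eq_zero_or_pos t with rfl | h1
      · rw [rot_zero]; exact hv
      rcases eq_or_lt_of_le ht with rfl | h2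
      · rw [hrotvu]; exact hu
      · exact hbwd t h1 (by omega)
    exact (reach_congr (Subtype.ext (congrArg inl (rot_zero v)))
      (Subtype.ext (congrArg inl hrotvu)) (reach_arc hk S v (2*k - d) h)).symm
  push_neg at hfwd hbwd
  obtain ⟨t1, ht11, ht12, ht13⟩ := hfwd
  obtain ⟨t2, ht21, ht22, ht23⟩ := hbwd
  rw [Set.notMem_compl_iff] at ht13 ht23
  obtain ⟨a, ha⟩ : ∃ x, x = rot u t1 := ⟨_, rfl⟩
  obtain ⟨b, hb⟩ : ∃ x, x = rot u (d + t2) := ⟨_, rfl⟩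
  obtain ⟨D, hD⟩ : ∃ x, x = d + t2 - t1 := ⟨_, rfl⟩
  rw [← ha] at ht13
  have hbeq : rot v t2 = rot u (d + t2) := by rw [← hrotuv, rot_rot]
  rw [hbeq, ← hb] at ht23
  have hab : a ≠ b := by
    intro h
    rw [ha, hb] at h
    have := rot_inj (by omega) (by omega) h
    omega
  have hS2 : ∀ c : Fin (2*k), (inl c : Fin (2*k) ⊕ Unit) ∈ S → c = a ∨ c = b := by
    intro c hc
    rcases hA a b c ht13 ht23 hc with h | h | h
    · exact absurd h hab
    · exact Or.inl h.symm
    · exact Or.inr h.symm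
  have hD2 : 2 ≤ D := by omega
  have hDn : D ≤ 2*k - 2 := by omega
  have hbrot : b = rot a D := by rw [hb, ha, rot_rot]; congr 1; omega
  have havoidA : ∀ m, 1 ≤ m → m ≤ D - 1 → (inl (rot a m) : Fin (2*k) ⊕ Unit) ∈ Sᶜ := by
    intro m h1 h2 hmem
    rcases hS2 _ hmem with h | h
    · have h' : rot a m = rot a 0 := by rw [rot_zero]; exact h
      have := rot_inj (by omega) (by omega) h'
      omega
    · have h' : rot a m = rot a D := by rw [← hbrot]; exact h
      have := rot_inj (by omega) (by omega) h'
      omega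
  have havoidB : ∀ m, 1 ≤ m → m ≤ (2*k - D) - 1 →
      (inl (rot b m) : Fin (2*k) ⊕ Unit) ∈ Sᶜ := by
    intro m h1 h2 hmem
    have hbm : rot b m = rot a (D + m) := by rw [hbrot, rot_rot]
    rcases hS2 _ hmem with h | h
    · have h' : rot a (D + m) = rot a 0 := by rw [← hbm, rot_zero]; exact h
      have := rot_inj (by omega) (by omega) h'
      omega
    · have h' : rot a (D + m) = rot a D := by rw [← hbm, ← hbrot]; exact h
      have := rot_inj (by omega) (by omega) h'
      omega
  have hv_off : v = rot a (d - t1) := by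
    rw [ha, rot_rot, show t1 + (d - t1) = d by omega, hrotuv]
  have hu_off : u = rot b (2*k - (d + t2)) := by
    rw [hb, rot_rot, show d + t2 + (2*k - (d + t2)) = 2*k by omega, rot_cycle]
  obtain ⟨p, q, hp1, hp2, hq1, hq2, hadj⟩ :
      ∃ p q, 1 ≤ p ∧ p ≤ D - 1 ∧ 1 ≤ q ∧ q ≤ (2*k - D) - 1 ∧
        (wheelLikeGraph k).Adj (inl (rot a p)) (inl (rot b q)) := by
    rcases le_or_gt D k with hDk | hDk
    · refine ⟨1, 1 + k - D, by omega, by omega, by omega, by omega, ?_⟩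
      have hthis := adj_rot_k hk (rot a 1)
      have e2 : rot (rot a 1) k = rot b (1 + k - D) := by
        rw [rot_rot, hbrot, rot_rot]
        congr 1
        omega
      rwa [e2] at hthis
    · refine ⟨D + 1 - k, 1, by omega, by omega, by omega, by omega, ?_⟩
      have hthis := adj_rot_k hk (rot b 1)
      have e2 : rot (rot b 1) k = rot a (D + 1 - k) := by
        rw [rot_rot, hbrot, rot_rot]
        apply Fin.ext
        rw [rot_val, rot_val,
          show a.val + (D + (1 + k)) = a.val + (D + 1 - k) + 2*k by omega,
          Nat.add_mod_right]
      rw [e2] at hthis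
      exact hthis.symm
  have hmemq : (inl (rot b q) : Fin (2*k) ⊕ Unit) ∈ Sᶜ := havoidB q hq1 hq2
  have hmemp : (inl (rot a p) : Fin (2*k) ⊕ Unit) ∈ Sᶜ := havoidA p hp1 hp2
  have hs1 : 1 ≤ 2*k - (d + t2) := by omega
  have hs2 : 2*k - (d + t2) ≤ (2*k - D) - 1 := by omega
  have humem : (inl (rot b (2*k - (d + t2))) : Fin (2*k) ⊕ Unit) ∈ Sᶜ := by
    rw [← hu_off]; exact hu
  have hvmem : (inl (rot a (d - t1)) : Fin (2*k) ⊕ Unit) ∈ Sᶜ := by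
    rw [← hv_off]; exact hv
  have r1 : ((wheelLikeGraph k).induce Sᶜ).Reachable ⟨inl u, hu⟩ ⟨inl (rot b q), hmemq⟩ := by
    refine reach_congr (Subtype.ext (congrArg inl hu_off.symm)) rfl
      (reach_between hk S b (2*k - (d + t2)) q
        (fun m hm1 hm2 => havoidB m (by omega) (by omega)) humem hmemq)
  have r2 : ((wheelLikeGraph k).induce Sᶜ).Reachable ⟨inl (rot b q), hmemq⟩
      ⟨inl (rot a p), hmemp⟩ := SimpleGraph.Adj.reachable hadj.symm
  have r3 : ((wheelLikeGraph k).induce Sᶜ).Reachable ⟨inl (rot a p), hmemp⟩ ⟨inl v, hv⟩ := by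
    refine reach_congr rfl (Subtype.ext (congrArg inl hv_off.symm))
      (reach_between hk S a p (d - t1)
        (fun m hm1 hm2 => havoidA m (by omega) (by omega)) hmemp hvmem)
  exact (r1.trans r2).trans r3


lemma adj_inl_iff (hk : 2 ≤ k) (i j : Fin (2*k)) :
    (wheelLikeGraph k).Adj (inl i) (inl j) ↔
      (j = rot i 1 ∨ j = rot i (2*k-1) ∨ j = rot i k) := by
  constructor
  · intro hadj
    rw [wheel_adj_inl_inl] at hadj
    obtain ⟨hne, h | h | h | h⟩ := hadj
    · exact Or.inl (Fin.ext h.symm)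
    · exact Or.inr (Or.inr (Fin.ext h.symm))
    · have h1 : rot j 1 = i := Fin.ext h
      have h2 : rot i (2*k-1) = j := by
        rw [← h1, rot_rot, show 1 + (2*k-1) = 2*k by omega, rot_cycle]
      exact Or.inr (Or.inl h2.symm)
    · have h1 : rot j k = i := Fin.ext h
      have h2 : rot i k = j := by
        rw [← h1, rot_rot, show k + k = 2*k by omega, rot_cycle]
      exact Or.inr (Or.inr h2.symm)
  · rintro (rfl | rfl | rfl)
    · exact adj_rot_one hk i
    · have h1 : rot (rot i (2*k-1)) 1 = i := by
        rw [rot_rot, show 2*k-1+1 = 2*k by omega, rot_cycle]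
      have h2 := (adj_rot_one hk (rot i (2*k-1))).symm
      rwa [h1] at h2
    · exact adj_rot_k hk i

section Deg

variable [DecidableRel (wheelLikeGraph k).Adj]

lemma neighborFinset_inl (hk : 2 ≤ k) (i : Fin (2*k)) :
    (wheelLikeGraph k).neighborFinset (inl i) =
      {inl (rot i 1), inl (rot i (2*k-1)), inl (rot i k), inr ()} := by
  ext w
  rw [SimpleGraph.mem_neighborFinset]
  cases w with
  | inl j =>
    rw [adj_inl_iff hk]
    simp
  | inr u =>
    cases u
    simp [adj_inr i]

lemma degree_inl (hk : 2 ≤ k) (i : Fin (2*k)) :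
    (wheelLikeGraph k).degree (inl i) = 4 := by
  have d1 : rot i 1 ≠ rot i (2*k-1) := fun h => by
    have := rot_inj (by omega) (by omega) h; omega
  have d2 : rot i 1 ≠ rot i k := fun h => by
    have := rot_inj (by omega) (by omega) h; omega
  have d3 : rot i (2*k-1) ≠ rot i k := fun h => by
    have := rot_inj (by omega) (by omega) h; omega
  rw [SimpleGraph.degree, neighborFinset_inl hk,
    Finset.card_insert_of_notMem (by simp [d1, d2]),
    Finset.card_insert_of_notMem (by simp [d3]),
    Finset.card_insert_of_notMem (by simp), Finset.card_singleton]

lemma degree_inr (hk : 2 ≤ k) :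
    (wheelLikeGraph k).degree (inr () : Fin (2*k) ⊕ Unit) = 2*k := by
  have hnf : (wheelLikeGraph k).neighborFinset (inr ()) =
      Finset.univ.map ⟨inl, Sum.inl_injective⟩ := by
    ext w
    rw [SimpleGraph.mem_neighborFinset]
    cases w with
    | inl j => simp [(adj_inr j).symm]
    | inr u => cases u; simp
  rw [SimpleGraph.degree, hnf, Finset.card_map, Finset.card_univ, Fintype.card_fin]

end Deg

end WheelAux

open Sum in
/-- For `k ≥ 2`, the graph `wheelLikeGraph k` is `4`-connected, has order `2k + 1`,
has exactly `5k = (5/2)(n-1)` edges, and its apex vertex `y` belongs to every vertex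
cut. -/
theorem wheelLikeGraph_properties (k : ℕ) (hk : 2 ≤ k) :
    KConnected 4 (wheelLikeGraph k) ∧
    Fintype.card (Fin (2 * k) ⊕ Unit) = 2 * k + 1 ∧
    (wheelLikeGraph k).edgeSet.ncard = 5 * k ∧
    ∀ S : Set (Fin (2 * k) ⊕ Unit), IsVertexCut (wheelLikeGraph k) S → Sum.inr () ∈ S := by
  classical
  have hcard : Fintype.card (Fin (2 * k) ⊕ Unit) = 2 * k + 1 := by simp
  refine ⟨⟨by rw [hcard]; omega, ?_⟩, hcard, ?_, ?_⟩
  · -- connectivity after deleting < 4 vertices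
    intro S hS
    rw [SimpleGraph.connected_iff]
    have hex : ∃ x : Fin (2*k) ⊕ Unit, x ∉ S := by
      by_contra h
      push_neg at h
      have he : S = Finset.univ := Finset.eq_univ_iff_forall.mpr h
      rw [he, Finset.card_univ, hcard] at hS
      omega
    obtain ⟨x0, hx0⟩ := hex
    refine ⟨?_, ⟨⟨x0, by simpa using hx0⟩⟩⟩
    intro x y
    by_cases hy : (inr () : Fin (2*k) ⊕ Unit) ∈ S
    · have hA : ∀ a b c : Fin (2*k), (inl a : Fin (2*k) ⊕ Unit) ∈ (↑S : Set _) →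
          (inl b : Fin (2*k) ⊕ Unit) ∈ (↑S : Set _) →
          (inl c : Fin (2*k) ⊕ Unit) ∈ (↑S : Set _) → a = b ∨ a = c ∨ b = c := by
        intro a b c ha hb hc
        by_contra hcon
        push_neg at hcon
        obtain ⟨hab, hac, hbc⟩ := hcon
        have hsub : ({inl a, inl b, inl c, inr ()} : Finset (Fin (2*k) ⊕ Unit)) ⊆ S := by
          intro z hz
          simp only [Finset.mem_insert, Finset.mem_singleton] at hz
          rcases hz with rfl | rfl | rfl | rfl
          · exact Finset.mem_coe.mp ha
          · exact Finset.mem_coe.mp hb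
          · exact Finset.mem_coe.mp hc
          · exact hy
        have hc4 : ({inl a, inl b, inl c, inr ()} : Finset (Fin (2*k) ⊕ Unit)).card = 4 := by
          rw [Finset.card_insert_of_notMem (by simp [hab, hac]),
            Finset.card_insert_of_notMem (by simp [hbc]),
            Finset.card_insert_of_notMem (by simp), Finset.card_singleton]
        have := Finset.card_le_card hsub
        omega
      obtain ⟨xv, hx⟩ := x
      obtain ⟨yv, hyv⟩ := y
      cases xv with
      | inr u => exact absurd hy (by cases u; simpa using hx)
      | inl i =>
        cases yv with
        | inr u => exact absurd hy (by cases u; simpa using hyv)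
        | inl j => exact WheelAux.main_reach hk _ hA i j hx hyv
    · have hy' : (inr () : Fin (2*k) ⊕ Unit) ∈ (↑S : Set _)ᶜ := by simpa using hy
      exact (WheelAux.reach_hub _ hy' x).trans (WheelAux.reach_hub _ hy' y).symm
  · -- edge count
    letI : DecidableRel (wheelLikeGraph k).Adj := Classical.decRel _
    have hsum := SimpleGraph.sum_degrees_eq_twice_card_edges (wheelLikeGraph k)
    rw [Fintype.sum_sum_type] at hsum
    simp only [WheelAux.degree_inl hk, Finset.sum_const, Finset.card_univ, Fintype.card_fin,
      smul_eq_mul, Fintype.card_unit] at hsum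
    have hunit : ∑ b : Unit, (wheelLikeGraph k).degree (inr b) = 2*k := by
      simp [WheelAux.degree_inr hk]
    rw [hunit] at hsum
    have hE : (wheelLikeGraph k).edgeFinset.card = 5*k := by omega
    rw [Set.ncard_eq_toFinset_card']
    simpa [SimpleGraph.edgeFinset] using hE
  · -- every vertex cut contains the apex
    intro S hcut
    by_contra hy
    obtain ⟨a, b, hnr⟩ := hcut
    exact hnr ((WheelAux.reach_hub S hy a).trans (WheelAux.reach_hub S hy b).symm)
end
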